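/- arXiv:0812.1968 — 4 statements merged into one kernel-verified Lean document; each statement's English description precedes it below -/
import Mathlib

section
/- Let G be a countable group, H a Hilbert space, and {u_g : g ∈ G} a bounded family in H. Let Φ be a left Følner sequence in G. If lim_{n→∞} (1/|Φ_n|²) · (limsup_{m→∞} (1/|Φ_m|) Σ_{g ∈ Φ_m} Σ_{h,k ∈ Φ_n} ⟨u_{hg}, u_{kg}⟩) = 0, then lim_{n→∞} ‖(1/|Φ_n|) Σ_{g ∈ Φ_n} u_g‖ = 0. -/
open MeasureTheory Filter

/-- `Φ` is a left Følner sequence in `Γ`: a sequence of nonempty finite subsets with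
`|Φₙ ∩ γΦₙ|/|Φₙ| → 1` for every `γ`. -/
def IsLeftFolner {Γ : Type*} [Group Γ] [DecidableEq Γ] (Φ : ℕ → Finset Γ) : Prop :=
  (∀ n, (Φ n).Nonempty) ∧
    ∀ γ : Γ, Filter.Tendsto
      (fun n => ((Φ n ∩ (Φ n).image (γ * ·)).card : ℝ) / ((Φ n).card : ℝ))
      Filter.atTop (nhds 1)

/-- `Φ` is a two-sided Følner sequence: a left Følner sequence with additionally
`|Φₙ ∩ Φₙγ|/|Φₙ| → 1` for every `γ`. -/
def IsTwoSidedFolner {Γ : Type*} [Group Γ] [DecidableEq Γ] (Φ : ℕ → Finset Γ) : Prop :=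
  IsLeftFolner Φ ∧
    ∀ γ : Γ, Filter.Tendsto
      (fun n => ((Φ n ∩ (Φ n).image (· * γ)).card : ℝ) / ((Φ n).card : ℝ))
      Filter.atTop (nhds 1)

/-!
Write `S m` for the average of `u` over `Φ m` and `V n m` for the average over `g ∈ Φ m` of the
average over `h ∈ Φ n` of `u (h * g)`. Left Følner invariance makes every translated average
`avg_{g ∈ Φ m} u (h * g)` close to `S m`, so `S m - V n m → 0` as `m → ∞` for each fixed `n`.
By convexity of `‖·‖²`, `‖V n m‖² ≤ |Φ n|⁻² · avg_{g ∈ Φ m} ‖∑_{h ∈ Φ n} u (h * g)‖²`, and expanding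
the square shows that this is the quantity in the hypothesis, whose `limsup` in `m` tends to `0`
with `n`.
-/

open Finset Topology

namespace Finset

variable {ι κ E : Type*} [SeminormedAddCommGroup E] [NormedSpace ℝ E]

noncomputable def avg (s : Finset ι) (f : ι → E) : E := (1 / (#s : ℝ)) • ∑ i ∈ s, f i

theorem avg_const {s : Finset ι} (hs : s.Nonempty) (x : E) : s.avg (fun _ => x) = x := by
  have : (#s : ℝ) ≠ 0 := by exact_mod_cast hs.card_pos.ne'
  simp [avg, sum_const, ← Nat.cast_smul_eq_nsmul ℝ, smul_smul, this]

theorem avg_sub (s : Finset ι) (f g : ι → E) :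
    s.avg (fun i => f i - g i) = s.avg f - s.avg g := by
  simp only [avg, sum_sub_distrib, smul_sub]

theorem avg_comm (s : Finset ι) (t : Finset κ) (f : ι → κ → E) :
    s.avg (fun i => t.avg (f i)) = t.avg (fun j => s.avg (f · j)) := by
  simp only [avg, ← smul_sum, smul_comm (1 / (#s : ℝ)) (1 / (#t : ℝ))]
  rw [sum_comm]

theorem tendsto_avg {α : Type*} {l : Filter α} {s : Finset ι} {F : ι → α → E} {a : ι → E}
    (h : ∀ i ∈ s, Tendsto (F i) l (𝓝 (a i))) :
    Tendsto (fun x => s.avg (F · x)) l (𝓝 (s.avg a)) :=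
  (tendsto_finsetSum s h).const_smul _

theorem norm_sq_avg_le (s : Finset ι) (f : ι → E) :
    ‖s.avg f‖ ^ 2 ≤ s.avg fun i => ‖f i‖ ^ 2 := by
  rcases s.eq_empty_or_nonempty with rfl | hs
  · simp [avg]
  have hcard : (0 : ℝ) < #s := by exact_mod_cast hs.card_pos
  calc ‖s.avg f‖ ^ 2 = (1 / (#s : ℝ)) ^ 2 * ‖∑ i ∈ s, f i‖ ^ 2 := by
        rw [avg, norm_smul, mul_pow, Real.norm_of_nonneg (by positivity)]
    _ ≤ (1 / (#s : ℝ)) ^ 2 * (#s * ∑ i ∈ s, ‖f i‖ ^ 2) := by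
        gcongr
        exact (pow_le_pow_left₀ (norm_nonneg _) (norm_sum_le _ _) 2).trans
          sq_sum_le_card_mul_sum_sq
    _ = s.avg fun i => ‖f i‖ ^ 2 := by
        rw [avg, smul_eq_mul]
        field_simp

theorem avg_le {s : Finset ι} (hs : s.Nonempty) {f : ι → ℝ} {c : ℝ} (h : ∀ i ∈ s, f i ≤ c) :
    s.avg f ≤ c := by
  calc s.avg f ≤ s.avg fun _ => c := by
        rw [avg, avg, smul_eq_mul, smul_eq_mul]
        gcongr with i hi
        exact h i hi
    _ = c := avg_const hs c

end Finset

theorem sum_sum_re_inner_eq_norm_sq {ι H : Type*} [SeminormedAddCommGroup H]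
    [InnerProductSpace ℂ H] (s : Finset ι) (w : ι → H) :
    ∑ i ∈ s, ∑ j ∈ s, (inner ℂ (w i) (w j)).re = ‖∑ i ∈ s, w i‖ ^ 2 := by
  rw [← inner_self_eq_norm_sq (𝕜 := ℂ), sum_inner]
  simp [inner_sum]

theorem norm_sum_sub_sum_le_of_card_eq {ι E : Type*} [SeminormedAddCommGroup E] [DecidableEq ι]
    {f : ι → E} {C : ℝ} (hC : ∀ i, ‖f i‖ ≤ C) {s t : Finset ι} (hst : #s = #t) :
    ‖∑ i ∈ s, f i - ∑ i ∈ t, f i‖ ≤ 2 * C * (#s - #(s ∩ t)) := by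
  have hst' : (#(s \ t) : ℝ) = #s - #(s ∩ t) := by
    rw [eq_sub_iff_add_eq]; exact_mod_cast card_sdiff_add_card_inter s t
  have hts' : (#(t \ s) : ℝ) = #s - #(s ∩ t) := by
    rw [eq_sub_iff_add_eq, hst, inter_comm]; exact_mod_cast card_sdiff_add_card_inter t s
  rw [← sum_sdiff_sub_sum_sdiff]
  calc ‖∑ i ∈ s \ t, f i - ∑ i ∈ t \ s, f i‖
      ≤ ‖∑ i ∈ s \ t, f i‖ + ‖∑ i ∈ t \ s, f i‖ := norm_sub_le _ _
    _ ≤ #(s \ t) * C + #(t \ s) * C := by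
        gcongr <;> simpa using norm_sum_le_of_le _ fun i _ => hC i
    _ = 2 * C * (#s - #(s ∩ t)) := by rw [hst', hts']; ring

section Folner

variable {G E : Type*} [Group G] [DecidableEq G] [SeminormedAddCommGroup E] [NormedSpace ℝ E]

theorem norm_avg_sub_avg_mul_left_le {u : G → E} {C : ℝ} (hC : ∀ g, ‖u g‖ ≤ C)
    {s : Finset G} (hs : s.Nonempty) (h : G) :
    ‖s.avg u - s.avg (fun g => u (h * g))‖
      ≤ 2 * C * (1 - #(s ∩ s.image (h * ·)) / #s) := by
  have hcard : (0 : ℝ) < #s := by exact_mod_cast hs.card_pos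
  have hinj : Function.Injective (h * ·) := mul_right_injective h
  have hsum : ∑ g ∈ s, u (h * g) = ∑ g ∈ s.image (h * ·), u g :=
    (sum_image fun x _ y _ hxy => hinj hxy).symm
  rw [avg, avg, hsum, ← smul_sub, norm_smul, Real.norm_of_nonneg (by positivity)]
  calc 1 / (#s : ℝ) * ‖∑ g ∈ s, u g - ∑ g ∈ s.image (h * ·), u g‖
      ≤ 1 / (#s : ℝ) * (2 * C * (#s - #(s ∩ s.image (h * ·)))) := by
        gcongr
        exact norm_sum_sub_sum_le_of_card_eq hC (card_image_of_injective s hinj).symm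
    _ = 2 * C * (1 - #(s ∩ s.image (h * ·)) / #s) := by
        field_simp

theorem IsLeftFolner.tendsto_avg_sub_avg_mul_left {Φ : ℕ → Finset G} (hΦ : IsLeftFolner Φ)
    {u : G → E} {C : ℝ} (hC : ∀ g, ‖u g‖ ≤ C) (h : G) :
    Tendsto (fun m => (Φ m).avg u - (Φ m).avg (fun g => u (h * g))) atTop (𝓝 0) := by
  have hlim := ((tendsto_const_nhds (x := (1 : ℝ))).sub (hΦ.2 h)).const_mul (2 * C)
  rw [sub_self, mul_zero] at hlim
  exact squeeze_zero_norm (fun m => norm_avg_sub_avg_mul_left_le hC (hΦ.1 m) h) hlim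

end Folner

theorem tendsto_zero_of_tendsto_sub_of_norm_sq_le {α β E : Type*} [SeminormedAddCommGroup E]
    {l : Filter α} {l' : Filter β} [l'.NeBot] {S : α → E} {V : β → α → E} {c : β → ℝ}
    {a : β → α → ℝ} (hSV : ∀ n, Tendsto (fun m => S m - V n m) l (𝓝 0))
    (hV : ∀ n m, ‖V n m‖ ^ 2 ≤ c n * a n m) (hc : ∀ n, 0 < c n)
    (ha : ∀ n, IsBoundedUnder (· ≤ ·) l (a n))
    (hlim : Tendsto (fun n => c n * limsup (a n) l) l' (𝓝 0)) :
    Tendsto S l (𝓝 0) := by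
  rw [NormedAddGroup.tendsto_nhds_zero]
  intro ε hε
  obtain ⟨n, hn⟩ := (hlim.eventually_lt_const (by positivity : (0 : ℝ) < (ε / 2) ^ 2)).exists
  have hlimsup : limsup (a n) l < (ε / 2) ^ 2 / c n := by
    rwa [lt_div_iff₀' (hc n)]
  filter_upwards [eventually_lt_of_limsup_lt hlimsup (ha n),
    (tendsto_zero_iff_norm_tendsto_zero.1 (hSV n)).eventually_lt_const (half_pos hε)]
    with m ham hSVm
  have hVm : ‖V n m‖ < ε / 2 := by
    refine lt_of_pow_lt_pow_left₀ 2 (by positivity) ((hV n m).trans_lt ?_)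
    rwa [← lt_div_iff₀' (hc n)]
  calc ‖S m‖ ≤ ‖S m - V n m‖ + ‖V n m‖ := norm_le_norm_sub_add _ _
    _ < ε / 2 + ε / 2 := by gcongr
    _ = ε := add_halves ε

theorem van_der_Corput_general
    {G : Type*} [Group G] [DecidableEq G]
    {H : Type*} [NormedAddCommGroup H] [InnerProductSpace ℂ H]
    (u : G → H) (hu : ∃ C : ℝ, ∀ g, ‖u g‖ ≤ C)
    (Φ : ℕ → Finset G) (hΦ : IsLeftFolner Φ)
    (hvdc : Tendsto (fun n =>
        (1 / ((Φ n).card : ℝ) ^ 2) *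
          Filter.limsup (fun m =>
            (1 / ((Φ m).card : ℝ)) *
              ∑ g ∈ Φ m, ∑ h ∈ Φ n, ∑ k ∈ Φ n,
                (inner ℂ (u (h * g)) (u (k * g)) : ℂ).re) Filter.atTop)
      atTop (nhds 0)) :
    Tendsto (fun n => ‖(1 / ((Φ n).card : ℝ)) • ∑ g ∈ Φ n, u g‖) atTop (nhds 0) := by
  obtain ⟨C, hC⟩ := hu
  have hinner (n m : ℕ) : (1 / ((Φ m).card : ℝ)) * ∑ g ∈ Φ m, ∑ h ∈ Φ n, ∑ k ∈ Φ n,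
      (inner ℂ (u (h * g)) (u (k * g))).re = (Φ m).avg fun g => ‖∑ h ∈ Φ n, u (h * g)‖ ^ 2 := by
    simp only [avg, smul_eq_mul, sum_sum_re_inner_eq_norm_sq]
  simp only [hinner] at hvdc
  have hc (n : ℕ) : 0 < 1 / ((Φ n).card : ℝ) ^ 2 :=
    one_div_pos.2 (pow_pos (Nat.cast_pos.2 (hΦ.1 n).card_pos) 2)
  refine tendsto_zero_iff_norm_tendsto_zero.mp (tendsto_zero_of_tendsto_sub_of_norm_sq_le
    (S := fun m => (Φ m).avg u) (V := fun n m => (Φ m).avg fun g => (Φ n).avg fun h => u (h * g))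
    (fun n => ?_) (fun n m => ?_) hc (fun n => ?_) hvdc)
  · have hdiff (m : ℕ) : (Φ m).avg u - (Φ m).avg (fun g => (Φ n).avg fun h => u (h * g)) =
        (Φ n).avg fun h => (Φ m).avg u - (Φ m).avg fun g => u (h * g) := by
      rw [avg_sub, avg_const (hΦ.1 n), avg_comm]
    simp only [hdiff]
    simpa [avg] using tendsto_avg fun h _ => hΦ.tendsto_avg_sub_avg_mul_left hC h
  · calc ‖(Φ m).avg fun g => (Φ n).avg fun h => u (h * g)‖ ^ 2
        ≤ (Φ m).avg fun g => ‖(Φ n).avg fun h => u (h * g)‖ ^ 2 := norm_sq_avg_le _ _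
      _ = 1 / ((Φ n).card : ℝ) ^ 2 * (Φ m).avg fun g => ‖∑ h ∈ Φ n, u (h * g)‖ ^ 2 := by
        simp only [avg, norm_smul, mul_pow, smul_eq_mul, mul_sum, Real.norm_eq_abs, sq_abs]
        ring_nf
  · refine isBoundedUnder_of ⟨((Φ n).card * C) ^ 2, fun m => avg_le (hΦ.1 m) fun g _ => ?_⟩
    refine pow_le_pow_left₀ (norm_nonneg _) ?_ 2
    simpa using norm_sum_le_of_le (Φ n) fun h _ => hC (h * g)

/-- van der Corput lemma, Lemma 4.1. If `{u_g}` is a bounded family in a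
Hilbert space and `Φ` a left Følner sequence with
`(1/|Φₙ|²)·limsup_m (1/|Φₘ|) Σ_{g∈Φₘ} Σ_{h,k∈Φₙ} ⟨u_{hg}, u_{kg}⟩ → 0`
(the inner double sum being real, we take real parts), then
`‖(1/|Φₙ|) Σ_{g∈Φₙ} u_g‖ → 0`. -/
theorem van_der_Corput
    {G : Type*} [Group G] [Countable G] [DecidableEq G]
    {H : Type*} [NormedAddCommGroup H] [InnerProductSpace ℂ H] [CompleteSpace H]
    (u : G → H) (hu : ∃ C : ℝ, ∀ g, ‖u g‖ ≤ C)
    (Φ : ℕ → Finset G) (hΦ : IsLeftFolner Φ)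
    (hvdc : Tendsto (fun n =>
        (1 / ((Φ n).card : ℝ) ^ 2) *
          Filter.limsup (fun m =>
            (1 / ((Φ m).card : ℝ)) *
              ∑ g ∈ Φ m, ∑ h ∈ Φ n, ∑ k ∈ Φ n,
                (inner ℂ (u (h * g)) (u (k * g)) : ℂ).re) Filter.atTop)
      atTop (nhds 0)) :
    Tendsto (fun n => ‖(1 / ((Φ n).card : ℝ)) • ∑ g ∈ Φ n, u g‖) atTop (nhds 0) :=
  van_der_Corput_general u hu Φ hΦ hvdc
end

section
/- Let G be a countable group, H a Hilbert space, and {u_{g,h} : g, h ∈ G} a bounded family in H. Let Φ, Ψ be two-sided Følner sequences in G. If lim_{n→∞} (1/(|Φ_n|²|Ψ_n|²)) · (limsup_{m→∞} (1/(|Φ_m||Ψ_m|)) Σ_{j,j' ∈ Φ_n} Σ_{k,k' ∈ Ψ_n} Σ_{g ∈ Φ_m} Σ_{h ∈ Ψ_m} ⟨u_{j'g, k'h}, u_{jg, kh}⟩) = 0, then lim_{n→∞} ‖(1/(|Φ_n||Ψ_n|)) Σ_{(g,h) ∈ Φ_n × Ψ_n} u_{g,h}‖ = 0. -/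
/-!
Viewing `u` as a function on the group `G × G`, on which `Φₙ × Ψₙ` is again a left Følner
sequence, reduces the statement to a single left Følner sequence `F`. There, fix `n` and put
`K = Fₙ`. Left invariance of `Fₘ` makes the average of `u` over `Fₘ` close, for each `a ∈ K`,
to the average of `x ↦ u (a x)`, hence to `w = avg_{a ∈ K} avg_{x ∈ Fₘ} u (a x)`. Exchanging
the two averages and using convexity of `‖·‖²` gives
`‖w‖² ≤ |K|⁻² avg_{x ∈ Fₘ} ‖∑_{a ∈ K} u (a x)‖²`,
whose limsup in `m` is small for a suitable `n` by hypothesis (expanding the square into inner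
products turns it into the form stated).
-/

open MeasureTheory Filter

open Finset Topology

lemma Filter.eventually_const_mul_lt_of_const_mul_limsup_lt {α : Type*} {f : Filter α}
    {u : α → ℝ} {c b : ℝ} (hc : 0 < c) (hu : IsBoundedUnder (· ≤ ·) f u)
    (h : c * limsup u f < b) : ∀ᶠ x in f, c * u x < b := by
  rw [← lt_div_iff₀' hc] at h
  filter_upwards [eventually_lt_of_limsup_lt h hu] with x hx
  rwa [← lt_div_iff₀' hc]

section NormedGroup

variable {ι E : Type*} [SeminormedAddCommGroup E]

lemma norm_sum_le_card_mul {s : Finset ι} {f : ι → E} {C : ℝ} (hf : ∀ i ∈ s, ‖f i‖ ≤ C) :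
    ‖∑ i ∈ s, f i‖ ≤ #s * C := by
  simpa using norm_sum_le_of_le s hf

lemma norm_sum_sub_sum_le [DecidableEq ι] (s t : Finset ι) {f : ι → E} {C : ℝ}
    (hf : ∀ i, ‖f i‖ ≤ C) :
    ‖∑ i ∈ s, f i - ∑ i ∈ t, f i‖ ≤ (#(s \ t) + #(t \ s)) * C := by
  rw [← sum_sdiff_sub_sum_sdiff, add_mul]
  exact (norm_sub_le _ _).trans
    (add_le_add (norm_sum_le_card_mul fun i _ => hf i) (norm_sum_le_card_mul fun i _ => hf i))

lemma norm_average_sq_le [NormedSpace ℝ E] (s : Finset ι) (v : ι → E) :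
    ‖(1 / (#s : ℝ)) • ∑ i ∈ s, v i‖ ^ 2 ≤ 1 / (#s : ℝ) * ∑ i ∈ s, ‖v i‖ ^ 2 := by
  rcases s.eq_empty_or_nonempty with rfl | hs
  · simp
  have hs : (0 : ℝ) < #s := by exact_mod_cast hs.card_pos
  calc ‖(1 / (#s : ℝ)) • ∑ i ∈ s, v i‖ ^ 2 = (1 / (#s : ℝ)) ^ 2 * ‖∑ i ∈ s, v i‖ ^ 2 := by
        rw [norm_smul, mul_pow, Real.norm_of_nonneg (by positivity)]
    _ ≤ (1 / (#s : ℝ)) ^ 2 * (∑ i ∈ s, ‖v i‖) ^ 2 := by gcongr; exact norm_sum_le _ _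
    _ ≤ (1 / (#s : ℝ)) ^ 2 * (#s * ∑ i ∈ s, ‖v i‖ ^ 2) := by
        gcongr; exact sq_sum_le_card_mul_sum_sq
    _ = 1 / (#s : ℝ) * ∑ i ∈ s, ‖v i‖ ^ 2 := by field_simp

end NormedGroup

lemma norm_sum_sq_eq_sum_sum_re_inner {ι 𝕜 E : Type*} [RCLike 𝕜]
    [SeminormedAddCommGroup E] [InnerProductSpace 𝕜 E] (s : Finset ι) (v : ι → E) :
    ‖∑ i ∈ s, v i‖ ^ 2 = ∑ i ∈ s, ∑ j ∈ s, RCLike.re (inner 𝕜 (v j) (v i)) := by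
  rw [← inner_self_eq_norm_sq (𝕜 := 𝕜)]
  simp only [sum_inner, inner_sum, map_sum]

section Shifts

variable {Γ E : Type*} [SeminormedAddCommGroup E]

lemma average_sq_norm_sum_shift_le [Mul Γ] {u : Γ → E} {C : ℝ} (hu : ∀ x, ‖u x‖ ≤ C)
    (K S : Finset Γ) :
    1 / (#S : ℝ) * ∑ x ∈ S, ‖∑ a ∈ K, u (a * x)‖ ^ 2 ≤ (#K * C) ^ 2 := by
  rcases S.eq_empty_or_nonempty with rfl | hS
  · simpa using sq_nonneg _
  have hS : (#S : ℝ) ≠ 0 := by exact_mod_cast hS.card_pos.ne'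
  calc 1 / (#S : ℝ) * ∑ x ∈ S, ‖∑ a ∈ K, u (a * x)‖ ^ 2
        ≤ 1 / (#S : ℝ) * ∑ _x ∈ S, (#K * C) ^ 2 := by
        gcongr with x
        exact norm_sum_le_card_mul fun a _ => hu _
    _ = (#K * C) ^ 2 := by rw [sum_const, nsmul_eq_mul]; field_simp

variable [NormedSpace ℝ E]

lemma norm_average_average_mul_sq_le [Mul Γ] (u : Γ → E) (K S : Finset Γ) :
    ‖(1 / (#K : ℝ)) • ∑ a ∈ K, (1 / (#S : ℝ)) • ∑ x ∈ S, u (a * x)‖ ^ 2 ≤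
      1 / (#K : ℝ) ^ 2 * (1 / (#S : ℝ) * ∑ x ∈ S, ‖∑ a ∈ K, u (a * x)‖ ^ 2) := by
  have hswap : (1 / (#K : ℝ)) • ∑ a ∈ K, (1 / (#S : ℝ)) • ∑ x ∈ S, u (a * x) =
      (1 / (#S : ℝ)) • ∑ x ∈ S, (1 / (#K : ℝ)) • ∑ a ∈ K, u (a * x) := by
    simp only [smul_sum, smul_smul, mul_comm]
    exact sum_comm
  rw [hswap]
  refine (norm_average_sq_le S _).trans_eq ?_
  simp only [one_div, norm_smul, norm_inv, RCLike.norm_natCast, mul_pow, inv_pow, ← mul_sum]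
  ring

variable [Group Γ] [DecidableEq Γ] {F : ℕ → Finset Γ} {u : Γ → E} {C : ℝ}

lemma IsLeftFolner.tendsto_norm_average_sub_average_mul (hF : IsLeftFolner F)
    (hu : ∀ x, ‖u x‖ ≤ C) (a : Γ) :
    Tendsto (fun m => ‖(1 / (#(F m) : ℝ)) • ∑ x ∈ F m, u x -
      (1 / (#(F m) : ℝ)) • ∑ x ∈ F m, u (a * x)‖) atTop (𝓝 0) := by
  have hbound : ∀ m, ‖(1 / (#(F m) : ℝ)) • ∑ x ∈ F m, u x -
      (1 / (#(F m) : ℝ)) • ∑ x ∈ F m, u (a * x)‖ ≤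
        2 * C * (1 - #(F m ∩ (F m).image (a * ·)) / #(F m)) := fun m => by
    set S := F m
    set aS := S.image (a * ·)
    have hS : (0 : ℝ) < #S := by exact_mod_cast (hF.1 m).card_pos
    have hshift : ∑ x ∈ S, u (a * x) = ∑ y ∈ aS, u y :=
      (sum_image fun _ _ _ _ h => mul_left_cancel h).symm
    have hcomm : #(aS \ S) = #(S \ aS) :=
      card_sdiff_comm (card_image_of_injective _ (mul_right_injective a))
    have hsdiff : (#(S \ aS) : ℝ) = #S - #(S ∩ aS) := by
      rw [eq_sub_iff_add_eq]; exact_mod_cast card_sdiff_add_card_inter _ _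
    rw [← smul_sub, norm_smul, hshift, Real.norm_of_nonneg (by positivity)]
    calc 1 / (#S : ℝ) * ‖∑ x ∈ S, u x - ∑ y ∈ aS, u y‖
        ≤ 1 / (#S : ℝ) * ((#(S \ aS) + #(aS \ S)) * C) := by
          gcongr; exact norm_sum_sub_sum_le _ _ hu
      _ = 2 * C * (1 - #(S ∩ aS) / #S) := by
          rw [hcomm, hsdiff]; field_simp; ring
  refine squeeze_zero (fun _ => norm_nonneg _) hbound ?_
  simpa using ((hF.2 a).const_sub 1).const_mul (2 * C)

lemma IsLeftFolner.tendsto_norm_average_sub_average_average_mul (hF : IsLeftFolner F)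
    (hu : ∀ x, ‖u x‖ ≤ C) {K : Finset Γ} (hK : K.Nonempty) :
    Tendsto (fun m => ‖(1 / (#(F m) : ℝ)) • ∑ x ∈ F m, u x -
      (1 / (#K : ℝ)) • ∑ a ∈ K, (1 / (#(F m) : ℝ)) • ∑ x ∈ F m, u (a * x)‖) atTop (𝓝 0) := by
  have hK : (#K : ℝ) ≠ 0 := by exact_mod_cast hK.card_pos.ne'
  have hbound : ∀ m, ‖(1 / (#(F m) : ℝ)) • ∑ x ∈ F m, u x -
      (1 / (#K : ℝ)) • ∑ a ∈ K, (1 / (#(F m) : ℝ)) • ∑ x ∈ F m, u (a * x)‖ ≤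
        1 / (#K : ℝ) * ∑ a ∈ K, ‖(1 / (#(F m) : ℝ)) • ∑ x ∈ F m, u x -
          (1 / (#(F m) : ℝ)) • ∑ x ∈ F m, u (a * x)‖ := fun m => by
    calc _ = ‖(1 / (#K : ℝ)) • ∑ a ∈ K, ((1 / (#(F m) : ℝ)) • ∑ x ∈ F m, u x -
          (1 / (#(F m) : ℝ)) • ∑ x ∈ F m, u (a * x))‖ := by
          rw [sum_sub_distrib, sum_const, smul_sub, ← Nat.cast_smul_eq_nsmul ℝ, smul_smul,
            one_div_mul_cancel hK, one_smul]
      _ ≤ _ := by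
          rw [norm_smul, Real.norm_of_nonneg (by positivity)]
          gcongr
          exact norm_sum_le _ _
  refine squeeze_zero (fun _ => norm_nonneg _) hbound ?_
  simpa using (tendsto_finsetSum K fun a _ =>
    hF.tendsto_norm_average_sub_average_mul hu a).const_mul (1 / (#K : ℝ))

end Shifts

theorem IsLeftFolner.tendsto_norm_average_of_tendsto_limsup {Γ E : Type*}
    [SeminormedAddCommGroup E] [NormedSpace ℝ E] [Group Γ] [DecidableEq Γ]
    {F : ℕ → Finset Γ} (hF : IsLeftFolner F) {u : Γ → E} {C : ℝ} (hu : ∀ x, ‖u x‖ ≤ C)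
    (hvdc : Tendsto (fun n => 1 / (#(F n) : ℝ) ^ 2 *
      limsup (fun m => 1 / (#(F m) : ℝ) * ∑ x ∈ F m, ‖∑ a ∈ F n, u (a * x)‖ ^ 2) atTop)
        atTop (𝓝 0)) :
    Tendsto (fun n => ‖(1 / (#(F n) : ℝ)) • ∑ x ∈ F n, u x‖) atTop (𝓝 0) := by
  refine Metric.tendsto_nhds.2 fun ε hε => ?_
  obtain ⟨n, hn⟩ := (hvdc.eventually_lt_const (by positivity : (0 : ℝ) < (ε / 2) ^ 2)).exists
  have hK : (0 : ℝ) < #(F n) := by exact_mod_cast (hF.1 n).card_pos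
  have hcorr := eventually_const_mul_lt_of_const_mul_limsup_lt (by positivity)
    (isBoundedUnder_of ⟨_, fun m => average_sq_norm_sum_shift_le hu (F n) (F m)⟩) hn
  filter_upwards [hcorr, (hF.tendsto_norm_average_sub_average_average_mul hu
    (hF.1 n)).eventually_lt_const (half_pos hε)] with m hcorr hshift
  set w := (1 / (#(F n) : ℝ)) • ∑ a ∈ F n, (1 / (#(F m) : ℝ)) • ∑ x ∈ F m, u (a * x)
  have hw : ‖w‖ < ε / 2 := by
    rw [← pow_lt_pow_iff_left₀ (norm_nonneg _) (by positivity) two_ne_zero]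
    exact (norm_average_average_mul_sq_le u (F n) (F m)).trans_lt hcorr
  rw [dist_zero_right, norm_norm]
  calc _ ≤ ‖w‖ + ‖(1 / (#(F m) : ℝ)) • ∑ x ∈ F m, u x - w‖ := norm_le_insert' _ _
    _ < ε / 2 + ε / 2 := add_lt_add hw hshift
    _ = ε := add_halves ε

lemma IsLeftFolner.prod {Γ Λ : Type*} [Group Γ] [DecidableEq Γ] [Group Λ] [DecidableEq Λ]
    {Φ : ℕ → Finset Γ} {Ψ : ℕ → Finset Λ} (hΦ : IsLeftFolner Φ) (hΨ : IsLeftFolner Ψ) :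
    IsLeftFolner fun n => Φ n ×ˢ Ψ n := by
  refine ⟨fun n => (hΦ.1 n).product (hΨ.1 n), fun γ => ?_⟩
  have hratio : ∀ n, (#(Φ n ×ˢ Ψ n ∩ (Φ n ×ˢ Ψ n).image (γ * ·)) : ℝ) / #(Φ n ×ˢ Ψ n) =
      #(Φ n ∩ (Φ n).image (γ.1 * ·)) / #(Φ n) *
        (#(Ψ n ∩ (Ψ n).image (γ.2 * ·)) / #(Ψ n)) := by
    intro n
    rw [show (γ * ·) = Prod.map (γ.1 * ·) (γ.2 * ·) from rfl, prodMap_image_product,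
      product_inter_product, card_product, card_product]
    push_cast
    ring
  have := (hΦ.2 γ.1).mul (hΨ.2 γ.2)
  rw [one_mul] at this
  exact this.congr fun n => (hratio n).symm

theorem van_der_Corput_two_variables_general
    {G : Type*} [Group G] [DecidableEq G]
    {H : Type*} [NormedAddCommGroup H] [InnerProductSpace ℂ H]
    (u : G → G → H) (hu : ∃ C : ℝ, ∀ g h, ‖u g h‖ ≤ C)
    (Φ Ψ : ℕ → Finset G) (hΦ : IsTwoSidedFolner Φ) (hΨ : IsTwoSidedFolner Ψ)
    (hvdc : Tendsto (fun n =>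
        (1 / (((Φ n).card : ℝ) ^ 2 * ((Ψ n).card : ℝ) ^ 2)) *
          Filter.limsup (fun m =>
            (1 / (((Φ m).card : ℝ) * ((Ψ m).card : ℝ))) *
              ∑ j ∈ Φ n, ∑ j' ∈ Φ n, ∑ k ∈ Ψ n, ∑ k' ∈ Ψ n,
                ∑ g ∈ Φ m, ∑ h ∈ Ψ m,
                  (inner ℂ (u (j' * g) (k' * h)) (u (j * g) (k * h)) : ℂ).re)
            Filter.atTop)
      atTop (nhds 0)) :
    Tendsto (fun n =>
        ‖(1 / (((Φ n).card : ℝ) * ((Ψ n).card : ℝ))) •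
          ∑ g ∈ Φ n, ∑ h ∈ Ψ n, u g h‖) atTop (nhds 0) := by
  obtain ⟨C, hC⟩ := hu
  have hcorr : ∀ n m, ∑ x ∈ Φ m ×ˢ Ψ m, ‖∑ a ∈ Φ n ×ˢ Ψ n, u (a.1 * x.1) (a.2 * x.2)‖ ^ 2 =
      ∑ j ∈ Φ n, ∑ j' ∈ Φ n, ∑ k ∈ Ψ n, ∑ k' ∈ Ψ n, ∑ g ∈ Φ m, ∑ h ∈ Ψ m,
        (inner ℂ (u (j' * g) (k' * h)) (u (j * g) (k * h))).re := by
    intro n m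
    simp only [norm_sum_sq_eq_sum_sum_re_inner (𝕜 := ℂ), RCLike.re_to_complex]
    rw [sum_comm]
    refine (sum_congr rfl fun a _ => sum_comm).trans ?_
    simp only [sum_product]
    exact sum_congr rfl fun j _ => sum_comm
  have := (hΦ.1.prod hΨ.1).tendsto_norm_average_of_tendsto_limsup
    (u := fun p => u p.1 p.2) (fun p => hC p.1 p.2) ?_
  · simpa [sum_product] using this
  · simpa [hcorr, mul_pow] using hvdc

/-- Corollary 4.2, double-variable van der Corput. If `{u_{g,h}}` is a
bounded family in a Hilbert space and `Φ, Ψ` are two-sided Følner sequences with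
`(1/(|Φₙ|²|Ψₙ|²))·limsup_m (1/(|Φₘ||Ψₘ|)) Σ_{j,j'∈Φₙ} Σ_{k,k'∈Ψₙ} Σ_{g∈Φₘ,h∈Ψₘ}
⟨u_{j'g,k'h}, u_{jg,kh}⟩ → 0` (taking real parts), then
`‖(1/(|Φₙ||Ψₙ|)) Σ_{(g,h)∈Φₙ×Ψₙ} u_{g,h}‖ → 0`. -/
theorem van_der_Corput_two_variables
    {G : Type*} [Group G] [Countable G] [DecidableEq G]
    {H : Type*} [NormedAddCommGroup H] [InnerProductSpace ℂ H] [CompleteSpace H]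
    (u : G → G → H) (hu : ∃ C : ℝ, ∀ g h, ‖u g h‖ ≤ C)
    (Φ Ψ : ℕ → Finset G) (hΦ : IsTwoSidedFolner Φ) (hΨ : IsTwoSidedFolner Ψ)
    (hvdc : Tendsto (fun n =>
        (1 / (((Φ n).card : ℝ) ^ 2 * ((Ψ n).card : ℝ) ^ 2)) *
          Filter.limsup (fun m =>
            (1 / (((Φ m).card : ℝ) * ((Ψ m).card : ℝ))) *
              ∑ j ∈ Φ n, ∑ j' ∈ Φ n, ∑ k ∈ Ψ n, ∑ k' ∈ Ψ n,
                ∑ g ∈ Φ m, ∑ h ∈ Ψ m,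
                  (inner ℂ (u (j' * g) (k' * h)) (u (j * g) (k * h)) : ℂ).re)
            Filter.atTop)
      atTop (nhds 0)) :
    Tendsto (fun n =>
        ‖(1 / (((Φ n).card : ℝ) * ((Ψ n).card : ℝ))) •
          ∑ g ∈ Φ n, ∑ h ∈ Ψ n, u g h‖) atTop (nhds 0) :=
  van_der_Corput_two_variables_general u hu Φ Ψ hΦ hΨ hvdc
end

section
/- Let G be a countable group admitting a two-sided Følner sequence, H a Banach space, and {u_{g,h} : g, h ∈ G} a bounded family in H. Suppose that there exist L, L' ∈ H such that for all two-sided Følner sequences Φ, Ψ in G: (i) L = lim_{n→∞} (1/(|Φ_n||Ψ_n|)) Σ_{(g,h)∈Φ_n×Ψ_n} u_{g,h}, and (ii) for each g ∈ G the limit v_g := lim_{m→∞} (1/|Ψ_m|) Σ_{h∈Ψ_m} u_{g,h} exists, is independent of Ψ, and L' = lim_{n→∞} (1/|Φ_n|) Σ_{g∈Φ_n} v_g. Then L = L'. -/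
/-!
Take for `Ψ` a subsequence `n ↦ Φ (m n)` of a two-sided Følner sequence `Φ`, so sparse that the
inner averages along `Ψ n` are already `1/(n+1)`-close to `v g` for all `g ∈ Φ n` (possible since
`Φ n` is finite). Then the double average along `(Φ, Ψ)` is `1/(n+1)`-close to the iterated one,
so both have the same limit.
-/

open MeasureTheory Filter

open Topology Finset

theorem IsLeftFolner.comp_tendsto {Γ : Type*} [Group Γ] [DecidableEq Γ] {Φ : ℕ → Finset Γ}
    (hΦ : IsLeftFolner Φ) {m : ℕ → ℕ} (hm : Tendsto m atTop atTop) :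
    IsLeftFolner (Φ ∘ m) :=
  ⟨fun n => hΦ.1 (m n), fun γ => (hΦ.2 γ).comp hm⟩

theorem IsTwoSidedFolner.comp_tendsto {Γ : Type*} [Group Γ] [DecidableEq Γ]
    {Φ : ℕ → Finset Γ} (hΦ : IsTwoSidedFolner Φ) {m : ℕ → ℕ} (hm : Tendsto m atTop atTop) :
    IsTwoSidedFolner (Φ ∘ m) :=
  ⟨hΦ.1.comp_tendsto hm, fun γ => (hΦ.2 γ).comp hm⟩

theorem exists_tendsto_atTop_forall_mem_dist_lt {ι α : Type*} [PseudoMetricSpace α]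
    {F : ℕ → ι → α} {w : ι → α} (hF : ∀ i, Tendsto (fun m => F m i) atTop (𝓝 (w i)))
    (S : ℕ → Finset ι) {ε : ℕ → ℝ} (hε : ∀ n, 0 < ε n) :
    ∃ m : ℕ → ℕ, Tendsto m atTop atTop ∧ ∀ n, ∀ i ∈ S n, dist (F (m n) i) (w i) < ε n := by
  have hclose : ∀ n, ∀ᶠ k in atTop, n ≤ k ∧ ∀ i ∈ S n, dist (F k i) (w i) < ε n := fun n =>
    (eventually_ge_atTop n).and <| (eventually_all_finset _).2 fun i _ =>
      Metric.tendsto_nhds.1 (hF i) (ε n) (hε n)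
  choose m hm using fun n => (hclose n).exists
  exact ⟨m, tendsto_atTop_mono (fun n => (hm n).1) tendsto_id, fun n => (hm n).2⟩

theorem Finset.one_div_card_mul_smul_sum_sum {ι κ 𝕜 M : Type*} [Field 𝕜] [AddCommMonoid M]
    [Module 𝕜 M] (s : Finset ι) (t : Finset κ) (u : ι → κ → M) :
    (1 / ((#s : 𝕜) * #t)) • ∑ i ∈ s, ∑ j ∈ t, u i j =
      (1 / (#s : 𝕜)) • ∑ i ∈ s, (1 / (#t : 𝕜)) • ∑ j ∈ t, u i j := by
  rw [← Finset.smul_sum, smul_smul, one_div_mul_one_div]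

theorem dist_one_div_card_smul_sum_le {ι E : Type*} [SeminormedAddCommGroup E]
    [NormedSpace ℝ E] {s : Finset ι} (hs : s.Nonempty) {f a : ι → E} {δ : ℝ}
    (h : ∀ i ∈ s, dist (f i) (a i) ≤ δ) :
    dist ((1 / (#s : ℝ)) • ∑ i ∈ s, f i) ((1 / (#s : ℝ)) • ∑ i ∈ s, a i) ≤ δ := by
  have hcard : (0 : ℝ) < #s := by exact_mod_cast hs.card_pos
  calc dist ((1 / (#s : ℝ)) • ∑ i ∈ s, f i) ((1 / (#s : ℝ)) • ∑ i ∈ s, a i)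
      = 1 / #s * dist (∑ i ∈ s, f i) (∑ i ∈ s, a i) := by
        rw [dist_smul₀, Real.norm_of_nonneg (by positivity)]
    _ ≤ 1 / #s * ∑ _i ∈ s, δ := by gcongr; exact dist_sum_sum_le_of_le s h
    _ = δ := by rw [sum_const, nsmul_eq_mul]; field_simp

theorem double_limit_eq_iterated_limit_general
    {G : Type*} [Group G] [DecidableEq G]
    (hFol : ∃ Φ : ℕ → Finset G, IsTwoSidedFolner Φ)
    {H : Type*} [NormedAddCommGroup H] [NormedSpace ℝ H]
    (u : G → G → H)
    (L L' : H) (v : G → H)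
    (hL : ∀ Φ Ψ : ℕ → Finset G, IsTwoSidedFolner Φ → IsTwoSidedFolner Ψ →
      Tendsto (fun n =>
          (1 / (((Φ n).card : ℝ) * ((Ψ n).card : ℝ))) •
            ∑ g ∈ Φ n, ∑ h ∈ Ψ n, u g h)
        atTop (nhds L))
    (hv : ∀ g : G, ∀ Ψ : ℕ → Finset G, IsTwoSidedFolner Ψ →
      Tendsto (fun m => (1 / ((Ψ m).card : ℝ)) • ∑ h ∈ Ψ m, u g h)
        atTop (nhds (v g)))
    (hL' : ∀ Φ : ℕ → Finset G, IsTwoSidedFolner Φ →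
      Tendsto (fun n => (1 / ((Φ n).card : ℝ)) • ∑ g ∈ Φ n, v g)
        atTop (nhds L')) :
    L = L' := by
  obtain ⟨Φ, hΦ⟩ := hFol
  obtain ⟨m, hm, hclose⟩ := exists_tendsto_atTop_forall_mem_dist_lt (fun g => hv g Φ hΦ) Φ
    (ε := fun n => 1 / ((n : ℝ) + 1)) fun n => by positivity
  refine tendsto_nhds_unique (hL Φ (Φ ∘ m) hΦ (hΦ.comp_tendsto hm)) ((hL' Φ hΦ).congr_dist ?_)
  simp only [Function.comp_apply, one_div_card_mul_smul_sum_sum]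
  exact squeeze_zero (fun _ => dist_nonneg)
    (fun n => dist_one_div_card_smul_sum_le (hΦ.1.1 n) fun g hg => by
      rw [dist_comm]; exact (hclose n g hg).le)
    tendsto_one_div_add_atTop_nhds_zero_nat

/-- iterated limits claim. Let `{u_{g,h}}` be a bounded family in a
Banach space such that for all two-sided Følner sequences `Φ, Ψ` the double averages
converge to `L`, and the iterated averages (first in `h` along `Ψ`, giving `v g`
independent of `Ψ`, then in `g` along `Φ`) converge to `L'`. Then `L = L'`. -/
theorem double_limit_eq_iterated_limit
    {G : Type*} [Group G] [Countable G] [DecidableEq G]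
    (hFol : ∃ Φ : ℕ → Finset G, IsTwoSidedFolner Φ)
    {H : Type*} [NormedAddCommGroup H] [NormedSpace ℝ H] [CompleteSpace H]
    (u : G → G → H) (hu : ∃ C : ℝ, ∀ g h, ‖u g h‖ ≤ C)
    (L L' : H) (v : G → H)
    (hL : ∀ Φ Ψ : ℕ → Finset G, IsTwoSidedFolner Φ → IsTwoSidedFolner Ψ →
      Tendsto (fun n =>
          (1 / (((Φ n).card : ℝ) * ((Ψ n).card : ℝ))) •
            ∑ g ∈ Φ n, ∑ h ∈ Ψ n, u g h)
        atTop (nhds L))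
    (hv : ∀ g : G, ∀ Ψ : ℕ → Finset G, IsTwoSidedFolner Ψ →
      Tendsto (fun m => (1 / ((Ψ m).card : ℝ)) • ∑ h ∈ Ψ m, u g h)
        atTop (nhds (v g)))
    (hL' : ∀ Φ : ℕ → Finset G, IsTwoSidedFolner Φ →
      Tendsto (fun n => (1 / ((Φ n).card : ℝ)) • ∑ g ∈ Φ n, v g)
        atTop (nhds L')) :
    L = L' :=
  double_limit_eq_iterated_limit_general hFol u L L' v hL hv hL'
end

section
/- Let G be a countable group and Φ a left Følner sequence in G × G. Let Ω = {0,1}^{G×G} with the product topology, with commuting G-actions T and S defined by (T_g ξ)(g₁, g₂) = ξ(g₁g, g₂) and (S_g ξ)(g₁, g₂) = ξ(g₁, g₂g). Let E ⊆ G × G, let 1_E ∈ Ω be its indicator function, and let X = closure of {T_g S_h 1_E : g, h ∈ G} in Ω. If d̄(E) = limsup_{n→∞} |E ∩ Φ_n|/|Φ_n| > 0, then there exists a Borel probability measure μ on X invariant under T_g and S_g for every g ∈ G such that μ({η ∈ X : η(e, e) = 1}) = d̄(E), where e is the identity of G. -/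
open MeasureTheory Filter

/-! Take the empirical measures `|Φₙ|⁻¹ ∑_{γ ∈ Φₙ} δ_{T_γ 1_E}` and a weak limit `μ` of them
along an ultrafilter on which the densities `|E ∩ Φₙ|/|Φₙ|` converge to their limsup; it exists
because the probability measures on the compact space `Ω` form a compact space. On a clopen set,
the empirical measures and their translates differ by at most the Følner defect, and clopen sets
are continuity sets generating the Borel σ-algebra; hence `μ` is invariant and gives the cylinder
`{η(e, e) = 1}` the measure `d̄(E)`. By the portmanteau theorem it is carried by the orbit closure,
which carries every empirical measure. -/

open Topology Set TopologicalSpace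
open scoped ENNReal

lemma Finset.card_filter_le_card_filter_add_card_sdiff {α : Type*} [DecidableEq α]
    (s t : Finset α) (p : α → Prop) [DecidablePred p] :
    (s.filter p).card ≤ (t.filter p).card + (s \ t).card :=
  calc (s.filter p).card ≤ (t.filter p ∪ s \ t).card := Finset.card_le_card fun x hx => by
        rw [Finset.mem_filter] at hx
        by_cases hxt : x ∈ t <;> simp [hx, hxt]
    _ ≤ _ := Finset.card_union_le _ _

section Empirical

variable {ι X : Type*} [MeasurableSpace X]

noncomputable def empiricalMeasure (s : Finset ι) (f : ι → X) : Measure X :=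
  (s.card : ℝ≥0∞)⁻¹ • ∑ i ∈ s, Measure.dirac (f i)

variable (s : Finset ι) (f : ι → X) {A : Set X}

lemma empiricalMeasure_apply [DecidablePred (· ∈ A)] (hA : MeasurableSet A) :
    empiricalMeasure s f A = (s.filter (f · ∈ A)).card / s.card := by
  simp only [empiricalMeasure, Measure.smul_apply, Measure.coe_finsetSum, Finset.sum_apply,
    Measure.dirac_apply' _ hA, smul_eq_mul, Finset.card_filter, Nat.cast_sum]
  rw [ENNReal.div_eq_inv_mul]
  congr 1
  refine Finset.sum_congr rfl fun i _ => ?_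
  by_cases h : f i ∈ A <;> simp [h]

lemma empiricalMeasure_real_apply [DecidablePred (· ∈ A)] (hA : MeasurableSet A) :
    (empiricalMeasure s f).real A = ((s.filter (f · ∈ A)).card : ℝ) / s.card := by
  simp [measureReal_def, empiricalMeasure_apply s f hA, ENNReal.toReal_div]

lemma empiricalMeasure_eq_one {s : Finset ι} (hs : s.Nonempty) (hA : MeasurableSet A)
    (hfA : ∀ i ∈ s, f i ∈ A) : empiricalMeasure s f A = 1 := by
  classical
  rw [empiricalMeasure_apply s f hA, Finset.filter_true_of_mem hfA]
  exact ENNReal.div_self (by simpa using hs.ne_empty) (ENNReal.natCast_ne_top _)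

lemma isProbabilityMeasure_empiricalMeasure {s : Finset ι} (hs : s.Nonempty) :
    IsProbabilityMeasure (empiricalMeasure s f) :=
  ⟨empiricalMeasure_eq_one f hs MeasurableSet.univ fun _ _ => mem_univ _⟩

lemma empiricalMeasure_map {T : X → X} (hT : Measurable T) :
    (empiricalMeasure s f).map T = empiricalMeasure s (T ∘ f) := by
  classical
  ext A hA
  rw [Measure.map_apply hT hA, empiricalMeasure_apply _ _ (hT hA), empiricalMeasure_apply _ _ hA]
  rfl

lemma empiricalMeasure_image [DecidableEq ι] {g : ι → ι} (hg : Function.Injective g) :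
    empiricalMeasure (s.image g) f = empiricalMeasure s (f ∘ g) := by
  classical
  ext A hA
  rw [empiricalMeasure_apply _ _ hA, empiricalMeasure_apply _ _ hA, Finset.filter_image,
    Finset.card_image_of_injective _ hg, Finset.card_image_of_injective _ hg]
  rfl

lemma abs_empiricalMeasure_real_sub_le [DecidableEq ι] {s t : Finset ι} (hst : s.card = t.card)
    (hA : MeasurableSet A) :
    |(empiricalMeasure t f).real A - (empiricalMeasure s f).real A|
      ≤ 1 - ((s ∩ t).card : ℝ) / s.card := by
  classical
  rw [empiricalMeasure_real_apply _ _ hA, empiricalMeasure_real_apply _ _ hA, ← hst]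
  rcases s.card.eq_zero_or_pos with h0 | hpos
  · simp [h0]
  have hN : (0 : ℝ) < s.card := by exact_mod_cast hpos
  rw [← sub_div, abs_div, abs_of_pos hN, one_sub_div hN.ne', div_le_div_iff_of_pos_right hN,
    abs_sub_le_iff]
  have hs : ((t.filter (f · ∈ A)).card : ℝ) ≤ (s.filter (f · ∈ A)).card + (t \ s).card := by
    exact_mod_cast Finset.card_filter_le_card_filter_add_card_sdiff t s (f · ∈ A)
  have ht : ((s.filter (f · ∈ A)).card : ℝ) ≤ (t.filter (f · ∈ A)).card + (s \ t).card := by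
    exact_mod_cast Finset.card_filter_le_card_filter_add_card_sdiff s t (f · ∈ A)
  have hs' : ((s ∩ t).card : ℝ) + (s \ t).card = s.card := by
    exact_mod_cast Finset.card_inter_add_card_sdiff s t
  have ht' : ((s ∩ t).card : ℝ) + (t \ s).card = s.card := by
    rw [Finset.inter_comm, hst]; exact_mod_cast Finset.card_inter_add_card_sdiff t s
  constructor <;> linarith

end Empirical

namespace MeasureTheory.ProbabilityMeasure

variable {X ι : Type*} [TopologicalSpace X] [MeasurableSpace X] [OpensMeasurableSpace X]
  [HasOuterApproxClosed X] {L : Filter ι} {ν : ι → ProbabilityMeasure X} {μ : ProbabilityMeasure X}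

lemma tendsto_measureReal_of_isClopen (hμ : Tendsto ν L (𝓝 μ)) {A : Set X} (hA : IsClopen A) :
    Tendsto (fun i => (ν i : Measure X).real A) L (𝓝 ((μ : Measure X).real A)) :=
  (ENNReal.tendsto_toReal (measure_ne_top _ _)).comp
    (tendsto_measure_of_null_frontier_of_tendsto' hμ (by simp [hA.frontier_eq]))

lemma measure_eq_one_of_tendsto [NeBot L] (hμ : Tendsto ν L (𝓝 μ)) {F : Set X}
    (hF : IsClosed F) (h : ∀ᶠ i in L, (ν i : Measure X) F = 1) : (μ : Measure X) F = 1 := by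
  refine le_antisymm prob_le_one ?_
  calc 1 = L.limsup fun i => (ν i : Measure X) F := by rw [limsup_congr h, limsup_const]
    _ ≤ _ := limsup_measure_closed_le_of_tendsto hμ hF

lemma measurePreserving_of_tendsto [CompactSpace X] [T2Space X] [TotallyDisconnectedSpace X]
    [SecondCountableTopology X] [BorelSpace X] [NeBot L] (hμ : Tendsto ν L (𝓝 μ)) {T : X → X}
    (hT : Continuous T) (hν : ∀ A, IsClopen A →
      Tendsto (fun i => (ν i : Measure X).real (T ⁻¹' A) - (ν i : Measure X).real A) L (𝓝 0)) :
    MeasurePreserving T μ μ := by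
  refine ⟨hT.measurable, ext_of_generate_finite {A | IsClopen A}
    (BorelSpace.measurable_eq.trans isTopologicalBasis_isClopen.borel_eq_generateFrom)
    (fun A hA B hB _ => hA.inter hB) (fun A (hA : IsClopen A) => ?_)
    (by simp [Measure.map_apply hT.measurable])⟩
  have hlim := (tendsto_measureReal_of_isClopen hμ (hA.preimage hT)).sub
    (tendsto_measureReal_of_isClopen hμ hA)
  have heq : (μ : Measure X).real (T ⁻¹' A) = (μ : Measure X).real A :=
    sub_eq_zero.1 (tendsto_nhds_unique hlim (hν A hA))
  rw [Measure.map_apply hT.measurable hA.isOpen.measurableSet]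
  exact (ENNReal.toReal_eq_toReal_iff' (measure_ne_top _ _) (measure_ne_top _ _)).1 heq

end MeasureTheory.ProbabilityMeasure

section Folner

variable {Γ X : Type*} [Group Γ] [DecidableEq Γ] [MeasurableSpace X] {Φ : ℕ → Finset Γ}

lemma IsLeftFolner.tendsto_empiricalMeasure_real_preimage_sub (hΦ : IsLeftFolner Φ) {f : Γ → X}
    {T : X → X} (hT : Measurable T) {γ : Γ} (hTf : ∀ x, T (f x) = f (γ * x)) {A : Set X}
    (hA : MeasurableSet A) :
    Tendsto (fun n => (empiricalMeasure (Φ n) f).real (T ⁻¹' A)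
      - (empiricalMeasure (Φ n) f).real A) atTop (𝓝 0) := by
  have hshift : ∀ n, (empiricalMeasure (Φ n) f).real (T ⁻¹' A)
      = (empiricalMeasure ((Φ n).image (γ * ·)) f).real A := fun n => by
    rw [← map_measureReal_apply hT hA, empiricalMeasure_map _ _ hT,
      empiricalMeasure_image _ _ (mul_right_injective γ)]
    exact congrArg (fun g => (empiricalMeasure (Φ n) g).real A) (funext hTf)
  simp_rw [hshift]
  refine squeeze_zero_norm (fun n => abs_empiricalMeasure_real_sub_le f
    (Finset.card_image_of_injective _ (mul_right_injective γ)).symm hA) ?_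
  simpa using (tendsto_const_nhds (x := (1 : ℝ))).sub (hΦ.2 γ)

theorem IsLeftFolner.exists_invariant_measure [TopologicalSpace X] [CompactSpace X] [T2Space X]
    [TotallyDisconnectedSpace X] [SecondCountableTopology X] [BorelSpace X]
    (hΦ : IsLeftFolner Φ) (f : Γ → X) (T : Γ → X → X) (hT : ∀ γ, Continuous (T γ))
    (hTf : ∀ γ x, T γ (f x) = f (γ * x)) {A : Set X} (hA : IsClopen A) :
    ∃ μ : Measure X, IsProbabilityMeasure μ ∧ μ (closure (range f)) = 1 ∧
      (∀ γ, MeasurePreserving (T γ) μ μ) ∧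
      μ.real A = limsup (fun n => (empiricalMeasure (Φ n) f).real A) atTop := by
  let ν : ℕ → ProbabilityMeasure X := fun n =>
    ⟨empiricalMeasure (Φ n) f, isProbabilityMeasure_empiricalMeasure f (hΦ.1 n)⟩
  obtain ⟨U, hU, hUA⟩ := mapClusterPt_iff_ultrafilter.1 <| MapClusterPt.limsup
    (u := fun n => (ν n : Measure X).real A)
    (isBoundedUnder_of (f := atTop) ⟨0, fun _ => measureReal_nonneg⟩).isCoboundedUnder_le
    (isBoundedUnder_of ⟨1, fun _ => measureReal_le_one⟩)
  obtain ⟨μ, -, hμ⟩ := isCompact_univ.ultrafilter_le_nhds (U.map ν) (by simp)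
  replace hμ : Tendsto ν U (𝓝 μ) := hμ
  refine ⟨μ, inferInstance, ?_, fun γ => ?_, ?_⟩
  · exact ProbabilityMeasure.measure_eq_one_of_tendsto hμ isClosed_closure <|
      Eventually.of_forall fun n => empiricalMeasure_eq_one f (hΦ.1 n)
        isClosed_closure.measurableSet fun i _ => subset_closure (mem_range_self i)
  · exact ProbabilityMeasure.measurePreserving_of_tendsto hμ (hT γ) fun A hA =>
      (hΦ.tendsto_empiricalMeasure_real_preimage_sub (hT γ).measurable (hTf γ)
        hA.isOpen.measurableSet).mono_left hU
  · exact tendsto_nhds_unique (ProbabilityMeasure.tendsto_measureReal_of_isClopen hμ hA) hUA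

end Folner

section Shift

variable {Γ : Type*} [Group Γ] (E : Set Γ) [DecidablePred (· ∈ E)]

-- For `Γ = G × G`, `T_g S_h 1_E` is `shiftedIndicator E (g, h)`.
def shiftedIndicator (γ : Γ) : Γ → Bool := fun p => if p * γ ∈ E then true else false

lemma shiftedIndicator_comp_mul_right (γ x : Γ) :
    (fun p => shiftedIndicator E x (p * γ)) = shiftedIndicator E (γ * x) := by
  funext p
  simp only [shiftedIndicator, mul_assoc]

lemma isClopen_setOf_apply_one : IsClopen {η : Γ → Bool | η 1 = true} :=
  (isClopen_discrete {true}).preimage (continuous_apply 1)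

lemma empiricalMeasure_real_setOf_apply_one (s : Finset Γ) :
    (empiricalMeasure s (shiftedIndicator E)).real {η | η 1 = true}
      = ((E ∩ ↑s).ncard : ℝ) / s.card := by
  classical
  have hfilter : s.filter (shiftedIndicator E · ∈ {η | η 1 = true}) = s.filter (· ∈ E) :=
    Finset.filter_congr fun x _ => by simp [shiftedIndicator]
  rw [empiricalMeasure_real_apply _ _ (measurableSet_eq_fun (measurable_pi_apply 1)
    measurable_const), hfilter, ← Set.ncard_coe_finset, Finset.coe_filter, Set.inter_comm]
  rfl

end Shift

theorem correspondence_principle_general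
    {G : Type*} [Group G] [Countable G] [DecidableEq G]
    (Φ : ℕ → Finset (G × G)) (hΦ : IsLeftFolner Φ)
    (E : Set (G × G)) [DecidablePred (· ∈ E)] (δ : ℝ)
    (hδ : Filter.limsup
        (fun n => ((E ∩ ↑(Φ n)).ncard : ℝ) / ((Φ n).card : ℝ)) Filter.atTop = δ) :
    ∃ μ : Measure ((G × G) → Bool), IsProbabilityMeasure μ ∧
      μ (closure {ξ : (G × G) → Bool | ∃ g h : G,
        ξ = fun p => if (p.1 * g, p.2 * h) ∈ E then true else false}) = 1 ∧
      (∀ g : G,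
        MeasurePreserving (fun ξ : (G × G) → Bool => fun p => ξ (p.1 * g, p.2)) μ μ) ∧
      (∀ g : G,
        MeasurePreserving (fun ξ : (G × G) → Bool => fun p => ξ (p.1, p.2 * g)) μ μ) ∧
      (μ ({η : (G × G) → Bool | η (1, 1) = true} ∩
        closure {ξ : (G × G) → Bool | ∃ g h : G,
          ξ = fun p => if (p.1 * g, p.2 * h) ∈ E then true else false})).toReal = δ := by
  have hrange : range (shiftedIndicator E) = {ξ : (G × G) → Bool | ∃ g h : G,
      ξ = fun p => if (p.1 * g, p.2 * h) ∈ E then true else false} := by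
    ext ξ
    exact ⟨fun ⟨γ, hγ⟩ => ⟨γ.1, γ.2, hγ.symm⟩, fun ⟨g, h, hξ⟩ => ⟨(g, h), hξ.symm⟩⟩
  obtain ⟨μ, hμ, hsupp, hinv, hdens⟩ := hΦ.exists_invariant_measure (shiftedIndicator E)
    (fun γ ξ p => ξ (p * γ)) (fun γ => by fun_prop) (shiftedIndicator_comp_mul_right E)
    isClopen_setOf_apply_one
  simp_rw [empiricalMeasure_real_setOf_apply_one, hδ] at hdens
  rw [hrange] at hsupp
  refine ⟨μ, hμ, hsupp, fun g => by simpa [Prod.mul_def] using hinv (g, 1),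
    fun g => by simpa [Prod.mul_def] using hinv (1, g), ?_⟩
  rw [measure_inter_conull ((prob_compl_eq_zero_iff isClosed_closure.measurableSet).2 hsupp)]
  exact hdens

/-- Proposition 5.1, correspondence principle. Let `G` be a countable
group, `Φ` a left Følner sequence in `G × G`, `E ⊆ G × G`, and `Ω = {0,1}^{G×G}` with the
shift actions `(T_g ξ)(g₁,g₂) = ξ(g₁g, g₂)` and `(S_g ξ)(g₁,g₂) = ξ(g₁, g₂g)`. If the
upper density `d̄(E) = limsup |E ∩ Φₙ|/|Φₙ| = δ > 0`, then there is a `T`- and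
`S`-invariant Borel probability measure `μ` concentrated on the orbit closure
`X = cl{T_g S_h 1_E}` with `μ({η ∈ X : η(e,e) = 1}) = δ`. -/
theorem correspondence_principle
    {G : Type*} [Group G] [Countable G] [DecidableEq G]
    (Φ : ℕ → Finset (G × G)) (hΦ : IsLeftFolner Φ)
    (E : Set (G × G)) [DecidablePred (· ∈ E)] (δ : ℝ)
    (hδ : Filter.limsup
        (fun n => ((E ∩ ↑(Φ n)).ncard : ℝ) / ((Φ n).card : ℝ)) Filter.atTop = δ)
    (hδpos : 0 < δ) :
    ∃ μ : Measure ((G × G) → Bool), IsProbabilityMeasure μ ∧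
      μ (closure {ξ : (G × G) → Bool | ∃ g h : G,
        ξ = fun p => if (p.1 * g, p.2 * h) ∈ E then true else false}) = 1 ∧
      (∀ g : G,
        MeasurePreserving (fun ξ : (G × G) → Bool => fun p => ξ (p.1 * g, p.2)) μ μ) ∧
      (∀ g : G,
        MeasurePreserving (fun ξ : (G × G) → Bool => fun p => ξ (p.1, p.2 * g)) μ μ) ∧
      (μ ({η : (G × G) → Bool | η (1, 1) = true} ∩
        closure {ξ : (G × G) → Bool | ∃ g h : G,
          ξ = fun p => if (p.1 * g, p.2 * h) ∈ E then true else false})).toReal = δ :=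
  correspondence_principle_general Φ hΦ E δ hδ
end
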